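/- Let 𝔐 be a graph-determined variety of rings. Then there exist a positive integer m, an integer d, and a polynomial g ∈ ℤ[x] such that every ring R ∈ 𝔐 satisfies m·x = 0 and d·x + x²·g(x) = 0 for all x ∈ R (where x²·g(x) denotes Σᵢ gᵢ·x^{i+2} with gᵢ the coefficients of g), and either d = 1 or d = q₁q₂⋯q_l is a product of pairwise distinct primes each of which divides m. -/

import Mathlib

/-!
The one-variable identities of `M`, read as `x ↦ x·f(x)`, form a subgroup of `ℤ[X]`, and their
linear coefficients form an ideal `dℤ`. Whenever `N ∣ d`, the null ring on `ℤ/N` is a quotient of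
the free one-generated `M`-ring, hence lies in `M`. If `p² ∣ d`, the null rings on `ℤ/p²` and on
`(ℤ/p)²` therefore both lie in `M`; their zero-divisor graphs are complete graphs on `p² - 1`
vertices, yet the rings are not isomorphic. So `d` is squarefree, in particular nonzero, and
substituting multiples `z·x` into the identity `d·x + x²g(x) = 0` and eliminating the higher
coefficients shows that a nonzero multiple of `d` kills every ring of `M`.
-/

/-- An element of a ring is a (one-sided or two-sided) zero-divisor: it is nonzero and
kills some nonzero element on the left or on the right. -/
def IsZD {R : Type*} [NonUnitalNonAssocRing R] (x : R) : Prop :=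
  x ≠ 0 ∧ ∃ y : R, y ≠ 0 ∧ (x * y = 0 ∨ y * x = 0)

/-- The zero-divisor graph `Γ(R)` of a ring `R`: vertices are the nonzero zero-divisors,
and distinct vertices `x`, `y` are adjacent iff `x*y = 0` or `y*x = 0`. -/
def zdvGraph (R : Type*) [NonUnitalNonAssocRing R] :
    SimpleGraph {x : R // IsZD x} where
  Adj a b := a ≠ b ∧ ((a : R) * (b : R) = 0 ∨ (b : R) * (a : R) = 0)
  symm := ⟨by
    rintro a b ⟨hne, h⟩
    exact ⟨hne.symm, h.symm⟩⟩
  loopless := ⟨by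
    rintro a ⟨hne, -⟩
    exact hne rfl⟩

/-- A variety of (associative, not necessarily unital or commutative) rings: a class of
rings closed under isomorphisms, subrings, homomorphic images and arbitrary products. -/
structure RingVariety : Type 1 where
  mem : ∀ (R : Type) [NonUnitalRing R], Prop
  closed_iso : ∀ (R S : Type) [NonUnitalRing R] [NonUnitalRing S],
    (R ≃+* S) → mem R → mem S
  closed_subring : ∀ (R : Type) [NonUnitalRing R] (S : NonUnitalSubring R),
    mem R → mem S
  closed_image : ∀ (R S : Type) [NonUnitalRing R] [NonUnitalRing S] (f : R →ₙ+* S),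
    Function.Surjective f → mem R → mem S
  closed_prod : ∀ (ι : Type) (R : ι → Type) [∀ i, NonUnitalRing (R i)],
    (∀ i, mem (R i)) → mem (∀ i, R i)

/-- A variety is graph-determined if any two finite rings in it with isomorphic
zero-divisor graphs are isomorphic. -/
def GraphDetermined (M : RingVariety) : Prop :=
  ∀ (R S : Type) [NonUnitalRing R] [NonUnitalRing S], Finite R → Finite S →
    M.mem R → M.mem S →
    Nonempty (zdvGraph R ≃g zdvGraph S) → Nonempty (R ≃+* S)

/-- The null ring on an abelian group `A`: all products are zero. -/
def NullRing (A : Type*) := A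

instance {A : Type*} [AddCommGroup A] : NonUnitalRing (NullRing A) :=
  { (inferInstance : AddCommGroup A) with
    mul := fun _ _ => (0 : A)
    left_distrib := fun _ _ _ => (add_zero (0 : A)).symm
    right_distrib := fun _ _ _ => (add_zero (0 : A)).symm
    zero_mul := fun _ => rfl
    mul_zero := fun _ => rfl
    mul_assoc := fun _ _ _ => rfl }

/-- `nupow x n = x^(n+1)`: powers (with positive exponent) in a possibly non-unital
ring. -/
def nupow {R : Type*} [Mul R] (x : R) : ℕ → R
  | 0 => x
  | n + 1 => nupow x n * x

open Polynomial Finset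

lemma nupow_mul_nupow {R : Type*} [Semigroup R] (x : R) (i j : ℕ) :
    nupow x i * nupow x j = nupow x (i + j + 1) := by
  induction j with
  | zero => rfl
  | succ j ih => rw [nupow, ← mul_assoc, ih]; rfl

section Evaluation

variable {R : Type*} [NonUnitalRing R]

lemma nupow_zsmul (z : ℤ) (x : R) (k : ℕ) : nupow (z • x) k = z ^ (k + 1) • nupow x k := by
  induction k with
  | zero => simp [nupow]
  | succ k ih => rw [nupow, nupow, ih, smul_mul_smul_comm, ← pow_succ]

lemma Pi.nupow_apply {ι : Type*} {S : ι → Type*} [∀ i, Mul (S i)] (x : ∀ i, S i) (n : ℕ)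
    (i : ι) : nupow x n i = nupow (x i) n := by
  induction n with
  | zero => rfl
  | succ n ih => rw [nupow, Pi.mul_apply, ih]; rfl

noncomputable def evalXMul (x : R) : ℤ[X] →ₗ[ℤ] R :=
  lsum fun i => LinearMap.toSpanSingleton ℤ R (nupow x i)

lemma evalXMul_apply (x : R) (f : ℤ[X]) : evalXMul x f = f.sum fun i a => a • nupow x i :=
  lsum_apply _ _

lemma evalXMul_monomial (x : R) (i : ℕ) (a : ℤ) :
    evalXMul x (monomial i a) = a • nupow x i := by
  rw [evalXMul_apply, sum_monomial_index a (fun i a => a • nupow x i) (zero_smul _ _)]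

lemma evalXMul_C (x : R) (c : ℤ) : evalXMul x (C c) = c • x := by
  rw [← monomial_zero_left, evalXMul_monomial]; rfl

lemma evalXMul_mul_X (x : R) (f g : ℤ[X]) :
    evalXMul x (f * g * X) = evalXMul x f * evalXMul x g := by
  induction f using Polynomial.induction_on' with
  | add p q hp hq => rw [add_mul, add_mul, map_add, map_add, hp, hq, add_mul]
  | monomial n a =>
    induction g using Polynomial.induction_on' with
    | add p q hp hq => rw [mul_add, add_mul, map_add, map_add, hp, hq, mul_add]
    | monomial m b =>
      rw [monomial_mul_monomial, ← monomial_one_one_eq_X, monomial_mul_monomial,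
        evalXMul_monomial, evalXMul_monomial, evalXMul_monomial, mul_one,
        smul_mul_smul_comm, nupow_mul_nupow]

lemma evalXMul_X_mul (x : R) (g : ℤ[X]) :
    evalXMul x (X * g) = g.sum fun i a => a • nupow x (i + 1) := by
  induction g using Polynomial.induction_on' with
  | add p q hp hq =>
    rw [mul_add, map_add, hp, hq, sum_add_index p q (fun i a => a • nupow x (i + 1))
      (fun _ => zero_smul _ _) fun _ _ _ => add_smul _ _ _]
  | monomial n a =>
    rw [← monomial_one_one_eq_X, monomial_mul_monomial, evalXMul_monomial, one_mul,
      sum_monomial_index a (fun i a => a • nupow x (i + 1)) (zero_smul _ _), add_comm]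

lemma evalXMul_eq_coeff_zero_smul_add (x : R) (f : ℤ[X]) :
    evalXMul x f = f.coeff 0 • x + f.divX.sum fun i a => a • nupow x (i + 1) := by
  conv_lhs => rw [← X_mul_divX_add f]
  rw [map_add, evalXMul_X_mul, evalXMul_C, add_comm]

lemma evalXMul_zsmul (z : ℤ) (x : R) (f : ℤ[X]) :
    evalXMul (z • x) f =
      ∑ k ∈ range (f.natDegree + 1), z ^ (k + 1) • (f.coeff k • nupow x k) := by
  rw [evalXMul_apply, sum_over_range (f := fun i a => a • nupow (z • x) i) f
    fun _ => zero_smul _ _]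
  refine sum_congr rfl fun k _ => ?_
  rw [nupow_zsmul, smul_comm]

lemma Pi.evalXMul_apply {ι : Type*} {S : ι → Type*} [∀ i, NonUnitalRing (S i)]
    (x : ∀ i, S i) (f : ℤ[X]) (i : ι) : evalXMul x f i = evalXMul (x i) f := by
  simp only [_root_.evalXMul_apply, Polynomial.sum, Finset.sum_apply, Pi.smul_apply,
    Pi.nupow_apply]

end Evaluation

/-- Substituting `2z` for `z` in a relation `∑_{k ≤ K+1} z^(k+1) • a k = 0` and subtracting
`2 ^ (K + 2)` times the relation cancels its top coefficient and multiplies `a 0` by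
`2 - 2 ^ (K + 2)`; this is the product of those factors. -/
def doublingConst (K : ℕ) : ℤ := ∏ j ∈ range K, (2 - 2 ^ (j + 2))

lemma doublingConst_ne_zero (K : ℕ) : doublingConst K ≠ 0 :=
  prod_ne_zero_iff.2 fun j _ => sub_ne_zero.2 (by
    have : (2 : ℤ) ^ 2 ≤ 2 ^ (j + 2) := pow_le_pow_right₀ (by norm_num) (by omega)
    omega)

lemma doublingConst_smul_eq_zero {A : Type*} [AddCommGroup A] (K : ℕ) (a : ℕ → A)
    (h : ∀ z : ℤ, ∑ k ∈ range (K + 1), z ^ (k + 1) • a k = 0) :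
    doublingConst K • a 0 = 0 := by
  induction K generalizing a with
  | zero => simpa [doublingConst] using h 1
  | succ K ih =>
    have hdouble : ∀ z : ℤ,
        ∑ k ∈ range (K + 1), z ^ (k + 1) • ((2 ^ (k + 1) - 2 ^ (K + 2) : ℤ) • a k) = 0 := by
      intro z
      calc ∑ k ∈ range (K + 1), z ^ (k + 1) • ((2 ^ (k + 1) - 2 ^ (K + 2) : ℤ) • a k)
          = ∑ k ∈ range (K + 2), z ^ (k + 1) • ((2 ^ (k + 1) - 2 ^ (K + 2) : ℤ) • a k) := by
            rw [sum_range_succ _ (K + 1), sub_self, zero_smul, smul_zero, add_zero]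
        _ = ∑ k ∈ range (K + 2), (2 * z) ^ (k + 1) • a k
            - (2 : ℤ) ^ (K + 2) • ∑ k ∈ range (K + 2), z ^ (k + 1) • a k := by
            rw [smul_sum, ← sum_sub_distrib]
            refine sum_congr rfl fun k _ => ?_
            rw [smul_smul, smul_smul, ← sub_smul]
            ring_nf
        _ = 0 := by rw [h, h, smul_zero, sub_zero]
    have := ih _ hdouble
    rwa [zero_add, pow_one, smul_smul, doublingConst, ← prod_range_succ] at this

lemma doublingConst_mul_coeff_zero_smul_eq_zero {R : Type*} [NonUnitalRing R] {f : ℤ[X]}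
    (hf : ∀ x : R, evalXMul x f = 0) (x : R) :
    (doublingConst f.natDegree * f.coeff 0) • x = 0 := by
  have := doublingConst_smul_eq_zero f.natDegree (fun k => f.coeff k • nupow x k)
    fun z => (evalXMul_zsmul z x f).symm.trans (hf _)
  rwa [← smul_smul]

namespace RingVariety

variable (M : RingVariety)

noncomputable def identities : Submodule ℤ ℤ[X] where
  carrier := {f | ∀ (R : Type) [NonUnitalRing R], M.mem R → ∀ x : R, evalXMul x f = 0}
  zero_mem' _ _ _ _ := map_zero _
  add_mem' hf hg R _ hR x := by rw [map_add, hf R hR x, hg R hR x, add_zero]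
  smul_mem' c _ hf R _ hR x := by rw [map_smul, hf R hR x, smul_zero]

noncomputable def linearCoeffs : Ideal ℤ := M.identities.map (lcoeff ℤ 0)

structure Witness (f : ℤ[X]) : Type 1 where
  carrier : Type
  [ring : NonUnitalRing carrier]
  mem : M.mem carrier
  point : carrier
  evalXMul_ne_zero : evalXMul point f ≠ 0

attribute [instance] Witness.ring

variable {M} in
lemma nonempty_witness {f : ℤ[X]} (hf : f ∉ M.identities) : Nonempty (M.Witness f) := by
  by_contra h
  exact hf fun R _ hR x => by_contra fun hx => h ⟨⟨R, hR, x, hx⟩⟩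

noncomputable def witness (f : {f // f ∉ M.identities}) : M.Witness f :=
  Classical.choice (nonempty_witness f.2)

/-- A product of witnesses for all non-identities; evaluating at its `generic` element detects
exactly the identities of `M`, so the subring it generates is the free one-generated `M`-ring. -/
abbrev GenericRing : Type := ∀ f : {f // f ∉ M.identities}, (M.witness f).carrier

noncomputable def generic : M.GenericRing := fun f => (M.witness f).point

lemma mem_genericRing : M.mem M.GenericRing :=
  M.closed_prod _ _ fun f => (M.witness f).mem

lemma evalXMul_generic_eq_zero_iff (f : ℤ[X]) :
    evalXMul M.generic f = 0 ↔ f ∈ M.identities := by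
  refine ⟨fun h => by_contra fun hf => ?_, fun hf => hf _ M.mem_genericRing _⟩
  have := congrFun h ⟨f, hf⟩
  rw [Pi.evalXMul_apply] at this
  exact (M.witness ⟨f, hf⟩).evalXMul_ne_zero this

noncomputable def genericSubring : NonUnitalSubring M.GenericRing where
  carrier := Set.range (evalXMul M.generic)
  zero_mem' := ⟨0, map_zero _⟩
  add_mem' := by rintro _ _ ⟨f, rfl⟩ ⟨g, rfl⟩; exact ⟨f + g, map_add _ _ _⟩
  neg_mem' := by rintro _ ⟨f, rfl⟩; exact ⟨-f, map_neg _ _⟩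
  mul_mem' := by rintro _ _ ⟨f, rfl⟩ ⟨g, rfl⟩; exact ⟨f * g * X, evalXMul_mul_X _ _ _⟩

lemma nullRing_zmod_mem (N : ℕ) (hN : M.linearCoeffs ≤ Ideal.span {(N : ℤ)}) :
    M.mem (NullRing (ZMod N)) := by
  let π : ℤ[X] →+ M.genericSubring :=
    AddMonoidHom.codRestrict (evalXMul M.generic).toAddMonoidHom _ fun f => ⟨f, rfl⟩
  have hπ : Function.Surjective π := by rintro ⟨_, f, rfl⟩; exact ⟨f, rfl⟩
  let c₀ : ℤ[X] →+ NullRing (ZMod N) :=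
    (Int.castAddHom (ZMod N)).comp (lcoeff ℤ 0).toAddMonoidHom
  have hker : π.ker ≤ c₀.ker := fun f hf => by
    have hf : f ∈ M.identities := (M.evalXMul_generic_eq_zero_iff f).1 (congrArg Subtype.val hf)
    have hN : (N : ℤ) ∣ f.coeff 0 := Ideal.mem_span_singleton.1 (hN ⟨f, hf, rfl⟩)
    exact (ZMod.intCast_zmod_eq_zero_iff_dvd _ N).2 hN
  let ψ := π.liftOfRightInverse _ (Function.rightInverse_surjInv hπ) ⟨c₀, hker⟩
  have hψ (f : ℤ[X]) : ψ (π f) = c₀ f := π.liftOfRightInverse_comp_apply _ _ _ f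
  let Ψ : M.genericSubring →ₙ+* NullRing (ZMod N) :=
    { ψ with
      map_mul' := by
        intro s t
        obtain ⟨f, rfl⟩ := hπ s
        obtain ⟨g, rfl⟩ := hπ t
        have hst : π f * π g = π (f * g * X) := Subtype.ext (evalXMul_mul_X _ _ _).symm
        change ψ (π f * π g) = 0
        rw [hst, hψ]
        change ((f * g * X).coeff 0 : ZMod N) = 0
        rw [mul_coeff_zero, coeff_X_zero, mul_zero, Int.cast_zero] }
  refine M.closed_image _ _ Ψ (fun y => ?_) (M.closed_subring _ _ M.mem_genericRing)
  obtain ⟨z, rfl⟩ := ZMod.intCast_surjective (n := N) y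
  exact ⟨π (C z), (hψ _).trans (congrArg _ (coeff_C_zero (a := z)))⟩

variable {M} in
lemma exists_nsmul_eq_zero_of_mem_identities {f : ℤ[X]} (hf : f ∈ M.identities)
    (hf₀ : f.coeff 0 ≠ 0) : ∃ m : ℕ, 0 < m ∧ f.coeff 0 ∣ m ∧
      ∀ (R : Type) [NonUnitalRing R], M.mem R → ∀ x : R, m • x = 0 :=
  ⟨(doublingConst f.natDegree * f.coeff 0).natAbs,
    Int.natAbs_pos.2 (mul_ne_zero (doublingConst_ne_zero _) hf₀),
    Int.dvd_natAbs.2 (dvd_mul_left _ _),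
    fun R _ hR x =>
      natAbs_nsmul_eq_zero.2 (doublingConst_mul_coeff_zero_smul_eq_zero (hf R hR) x)⟩

end RingVariety

instance {A : Type*} [Finite A] : Finite (NullRing A) := inferInstanceAs (Finite A)

lemma isZD_iff_ne_zero {A : Type*} [NonUnitalNonAssocRing A] (hA : ∀ a b : A, a * b = 0)
    (x : A) : IsZD x ↔ x ≠ 0 :=
  ⟨And.left, fun hx => ⟨hx, x, hx, .inl (hA x x)⟩⟩

lemma zdvGraph_eq_top {A : Type*} [NonUnitalNonAssocRing A] (hA : ∀ a b : A, a * b = 0) :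
    zdvGraph A = ⊤ := by
  ext u v
  exact ⟨And.left, fun huv => ⟨huv, .inl (hA _ _)⟩⟩

lemma GraphDetermined.nonempty_ringEquiv_of_mul_eq_zero {M : RingVariety}
    (hgd : GraphDetermined M) {A B : Type} [NonUnitalRing A] [NonUnitalRing B] [Finite A]
    [Finite B] (hMA : M.mem A) (hMB : M.mem B)
    (hA : ∀ a b : A, a * b = 0) (hB : ∀ a b : B, a * b = 0) (hcard : Nat.card A = Nat.card B) :
    Nonempty (A ≃+* B) := by
  classical
  obtain ⟨e⟩ := Finite.card_eq.1 hcard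
  let e₀ : A ≃ B := e.trans (Equiv.swap (e 0) 0)
  have he₀ : e₀ 0 = 0 := Equiv.swap_apply_left (e 0) 0
  refine hgd A B ‹_› ‹_› hMA hMB ⟨?_⟩
  rw [zdvGraph_eq_top hA, zdvGraph_eq_top hB]
  exact .completeGraph (e₀.subtypeEquiv fun x => by
    rw [isZD_iff_ne_zero hA, isZD_iff_ne_zero hB, ← he₀, e₀.injective.ne_iff])

lemma isEmpty_ringEquiv_nullRing_zmod_sq {p : ℕ} (hp : p.Prime) :
    IsEmpty (NullRing (ZMod (p ^ 2)) ≃+* (Bool → NullRing (ZMod p))) := by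
  refine ⟨fun e => ?_⟩
  have torsion (y : ZMod p) : p • y = 0 := by rw [nsmul_eq_mul, ZMod.natCast_self, zero_mul]
  let u : NullRing (ZMod (p ^ 2)) := (1 : ZMod (p ^ 2))
  have hu : p • u = 0 :=
    (map_eq_zero_iff e e.injective).1 ((map_nsmul e p u).trans (funext fun b => torsion _))
  have : p ^ 2 ∣ p ^ 1 := by
    rw [pow_one, ← ZMod.natCast_eq_zero_iff, ← nsmul_one]
    exact hu
  exact absurd ((Nat.pow_dvd_pow_iff_le_right hp.one_lt).1 this) (by norm_num)

lemma GraphDetermined.squarefree_of_linearCoeffs_eq {M : RingVariety} (hgd : GraphDetermined M)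
    {d : ℕ} (hd : M.linearCoeffs = Ideal.span {(d : ℤ)}) : Squarefree d := by
  refine Nat.squarefree_iff_prime_squarefree.2 fun p hp hpd => ?_
  have : NeZero p := ⟨hp.ne_zero⟩
  have hmem (N : ℕ) (hN : N ∣ d) : M.mem (NullRing (ZMod N)) := M.nullRing_zmod_mem N <|
    hd ▸ Ideal.span_singleton_le_span_singleton.2 (Int.natCast_dvd_natCast.2 hN)
  have hcard : Nat.card (NullRing (ZMod (p ^ 2))) = Nat.card (Bool → NullRing (ZMod p)) := by
    rw [Nat.card_fun, Nat.card_eq_fintype_card (α := Bool), Fintype.card_bool]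
    exact (Nat.card_zmod _).trans (congrArg (· ^ 2) (Nat.card_zmod p).symm)
  obtain ⟨e⟩ := hgd.nonempty_ringEquiv_of_mul_eq_zero (hmem _ (sq p ▸ hpd))
    (M.closed_prod _ _ fun _ => hmem p (dvd_of_mul_left_dvd hpd))
    (fun _ _ => rfl) (fun _ _ => rfl) hcard
  exact (isEmpty_ringEquiv_nullRing_zmod_sq hp).false e

lemma Squarefree.natCast_eq_one_or_eq_prod_primes {d m : ℕ} (hd : Squarefree d) (hdm : d ∣ m) :
    (d : ℤ) = 1 ∨ ∃ qs : Finset ℕ, qs.Nonempty ∧ (∀ q ∈ qs, q.Prime ∧ q ∣ m) ∧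
      (d : ℤ) = ∏ q ∈ qs, (q : ℤ) := by
  rcases eq_or_ne d 1 with rfl | hd₁
  · exact .inl Nat.cast_one
  refine .inr ⟨d.primeFactors, Nat.nonempty_primeFactors.2 ?_, fun q hq =>
    ⟨Nat.prime_of_mem_primeFactors hq, (Nat.dvd_of_mem_primeFactors hq).trans hdm⟩, ?_⟩
  · have := hd.ne_zero
    omega
  · rw [← Nat.cast_prod, Nat.prod_primeFactors_of_squarefree hd]

/-- If `𝔐` is a graph-determined variety, then `𝔐` satisfies identities `m·x = 0` and
`d·x + x²·g(x) = 0` where `m > 0`, `g ∈ ℤ[x]` (here `x²·g(x) = Σᵢ gᵢ·x^(i+2)`, and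
`nupow x (i+1) = x^(i+2)`), and either `d = 1` or `d` is a product of pairwise distinct
primes each dividing `m`. -/
theorem graphDetermined_identities (M : RingVariety) (hgd : GraphDetermined M) :
    ∃ m : ℕ, 0 < m ∧ ∃ (d : ℤ) (g : Polynomial ℤ),
      (∀ (R : Type) [inst : NonUnitalRing R], M.mem R → ∀ x : R,
        m • x = 0 ∧ d • x + g.sum (fun i a => a • nupow x (i + 1)) = 0) ∧
      (d = 1 ∨ ∃ qs : Finset ℕ, qs.Nonempty ∧ (∀ q ∈ qs, q.Prime ∧ q ∣ m) ∧
        d = ∏ q ∈ qs, (q : ℤ)) := by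
  obtain ⟨d, hd⟩ : ∃ d : ℕ, M.linearCoeffs = Ideal.span {(d : ℤ)} :=
    ⟨_, ((Ideal.span_singleton_generator _).symm.trans (Int.span_natAbs _).symm)⟩
  have hsq : Squarefree d := hgd.squarefree_of_linearCoeffs_eq hd
  obtain ⟨f, hf, hfd⟩ : ∃ f ∈ M.identities, f.coeff 0 = d :=
    Submodule.mem_map.1 (hd ▸ Ideal.mem_span_singleton_self _)
  obtain ⟨m, hm, hdm, htors⟩ :=
    M.exists_nsmul_eq_zero_of_mem_identities hf (hfd ▸ Nat.cast_ne_zero.2 hsq.ne_zero)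
  refine ⟨m, hm, d, f.divX, fun R _ hR x => ⟨htors R hR x, ?_⟩,
    hsq.natCast_eq_one_or_eq_prod_primes (Int.natCast_dvd_natCast.1 (hfd ▸ hdm))⟩
  rw [← hfd, ← evalXMul_eq_coeff_zero_smul_add]
  exact hf R hR x
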